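/- Let n ≥ 3, let r_1, …, r_n > 0 and let 0 < σ < r_i for all i. Suppose α_1, …, α_n is a connecting cycle such that for every j (indices mod n) the distance from the origin O to the line through p_j and p_{j+1} equals σ and the foot of the perpendicular from O to that line lies strictly between p_j and p_{j+1}. Then the perimeter equals L = 2 Σ_{i=1}^n √(r_i² − σ²). -/

import Mathlib

open Real RealInnerProductSpace

/-- The point with polar radius `ρ` and polar angle `θ` in the Euclidean plane. -/
noncomputable def pt (ρ θ : ℝ) : EuclideanSpace ℝ (Fin 2) :=
  WithLp.toLp 2 ![ρ * Real.cos θ, ρ * Real.sin θ]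

/-- The `i`-th vertex `p_i = (r_i cos α_i, r_i sin α_i)` of the connecting cycle. -/
noncomputable def vert {n : ℕ} [NeZero n] (r α : Fin n → ℝ) (i : Fin n) :
    EuclideanSpace ℝ (Fin 2) :=
  pt (r i) (α i)

/-- The perimeter `L = Σ_j |p_j − p_{j+1}|` of the connecting cycle (indices mod `n`). -/
noncomputable def perimE {n : ℕ} [NeZero n] (r α : Fin n → ℝ) : ℝ :=
  ∑ j, dist (vert r α j) (vert r α (j + 1))

/-! Each side `p_j p_{j+1}` is split by its tangency point `q_j` into the two tangent segments
from `p_j` and from `p_{j+1}` to the socle; by Pythagoras (`O q_j ⟂ p_j p_{j+1}`) these have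
lengths `√(r_j² − σ²)` and `√(r_{j+1}² − σ²)`. Summing over the sides, every vertex contributes
its tangent length twice. -/

lemma norm_pt {ρ : ℝ} (hρ : 0 ≤ ρ) (θ : ℝ) : ‖pt ρ θ‖ = ρ := by
  rw [EuclideanSpace.norm_eq, Fin.sum_univ_two]
  simp only [pt, Real.norm_eq_abs, sq_abs, Matrix.cons_val_zero, Matrix.cons_val_one]
  have hρθ : (ρ * cos θ) ^ 2 + (ρ * sin θ) ^ 2 = ρ ^ 2 := by
    linear_combination ρ ^ 2 * cos_sq_add_sin_sq θ
  rw [hρθ, Real.sqrt_sq hρ]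

section InnerProductSpace

variable {E : Type*} [NormedAddCommGroup E] [InnerProductSpace ℝ E]

lemma dist_eq_sqrt_add_sqrt_of_inner_eq_zero {p p' : E} {t : ℝ} (ht : t ∈ Set.Icc (0 : ℝ) 1)
    (hperp : ⟪p + t • (p' - p), p' - p⟫ = 0) :
    dist p p' = √(‖p‖ ^ 2 - ‖p + t • (p' - p)‖ ^ 2)
      + √(‖p'‖ ^ 2 - ‖p + t • (p' - p)‖ ^ 2) := by
  set v := p' - p
  set q := p + t • v
  have pythagoras (s : ℝ) : ‖q + s • v‖ ^ 2 - ‖q‖ ^ 2 = (|s| * ‖v‖) ^ 2 := by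
    rw [norm_add_sq_real, real_inner_smul_right, hperp, norm_smul, Real.norm_eq_abs]
    ring
  have hp : p = q + (-t) • v := by simp only [q]; module
  have hp' : p' = q + (1 - t) • v := by simp only [q, v]; module
  rw [hp, pythagoras, hp', pythagoras, Real.sqrt_sq (by positivity),
    Real.sqrt_sq (by positivity), abs_neg, abs_of_nonneg ht.1,
    abs_of_nonneg (sub_nonneg.2 ht.2), ← hp, ← hp', dist_comm, dist_eq_norm]
  ring

end InnerProductSpace

theorem stmt_4_general {n : ℕ} [NeZero n] (r : Fin n → ℝ) (hr : ∀ i, 0 < r i)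
    (α : Fin n → ℝ) (σ : ℝ)
    (htan : ∀ j, Metric.infDist (0 : EuclideanSpace ℝ (Fin 2))
        (affineSpan ℝ {vert r α j, vert r α (j + 1)} :
          Set (EuclideanSpace ℝ (Fin 2))) = σ ∧
      ∃ t ∈ Set.Ioo (0 : ℝ) 1,
        ⟪vert r α j + t • (vert r α (j + 1) - vert r α j),
            vert r α (j + 1) - vert r α j⟫ = 0 ∧
        ‖vert r α j + t • (vert r α (j + 1) - vert r α j)‖ = σ) :
    perimE r α = 2 * ∑ i, Real.sqrt (r i ^ 2 - σ ^ 2) := by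
  have side (j : Fin n) : dist (vert r α j) (vert r α (j + 1)) =
      √(r j ^ 2 - σ ^ 2) + √(r (j + 1) ^ 2 - σ ^ 2) := by
    obtain ⟨-, t, ht, hperp, hfoot⟩ := htan j
    rw [dist_eq_sqrt_add_sqrt_of_inner_eq_zero (Set.Ioo_subset_Icc_self ht) hperp, hfoot,
      vert, vert, norm_pt (hr j).le, norm_pt (hr (j + 1)).le]
  have shift : ∑ j : Fin n, √(r (j + 1) ^ 2 - σ ^ 2) = ∑ j : Fin n, √(r j ^ 2 - σ ^ 2) :=
    Equiv.sum_comp (Equiv.addRight 1) (fun j => √(r j ^ 2 - σ ^ 2))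
  rw [perimE, Finset.sum_congr rfl fun j _ => side j, Finset.sum_add_distrib, shift]
  ring

/-- if every side of a connecting cycle is at distance `σ` from the origin and
the foot of the perpendicular from the origin to each side line lies strictly between the
two endpoints (with `0 < σ < r_i` for all `i`, so the cycle circumscribes the socle of
radius `σ`), then the perimeter equals `2 Σ_i √(r_i² − σ²)`. -/
theorem stmt_4 {n : ℕ} [NeZero n] (hn : 3 ≤ n) (r : Fin n → ℝ) (hr : ∀ i, 0 < r i)
    (α : Fin n → ℝ) (σ : ℝ) (hσ0 : 0 < σ) (hσr : ∀ i, σ < r i)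
    (htan : ∀ j, Metric.infDist (0 : EuclideanSpace ℝ (Fin 2))
        (affineSpan ℝ {vert r α j, vert r α (j + 1)} :
          Set (EuclideanSpace ℝ (Fin 2))) = σ ∧
      ∃ t ∈ Set.Ioo (0 : ℝ) 1,
        ⟪vert r α j + t • (vert r α (j + 1) - vert r α j),
            vert r α (j + 1) - vert r α j⟫ = 0 ∧
        ‖vert r α j + t • (vert r α (j + 1) - vert r α j)‖ = σ) :
    perimE r α = 2 * ∑ i, Real.sqrt (r i ^ 2 - σ ^ 2) :=
  stmt_4_general r hr α σ htan
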